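/- arXiv:2110.02555 — 4 statements merged into one kernel-verified Lean document; each statement's English description precedes it below -/
import Mathlib

section
/- In the last-choice reduction (preference lists as in the generous gadget where v^7_i: (v^8_i, v^6_i, w^4_i)), if G is a cubic graph with n vertices and C a vertex cover of size k, then the matching given by case 1 on agent groups of vertices in C and case 2 on agent groups of vertices not in C is a stable matching with exactly 4k + 3(n − k) = 3n + k agents matched to their third choices, and no agent matched to a rank worse than 3. -/
/-- An SRI instance: each agent has a strict preference list over acceptable agents. -/
structure SRI (A : Type) where
  pref : A → List A

namespace SRI

variable {A : Type} [DecidableEq A]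

/-- `b` is acceptable to `a`. -/
def acceptable (I : SRI A) (a b : A) : Prop := b ∈ I.pref a

/-- rank(a,b): 1 plus the number of agents `a` prefers to `b`. -/
def rank (I : SRI A) (a b : A) : ℕ := (I.pref a).idxOf b + 1

/-- `M` (a partner function) is a matching: symmetric and irreflexive. -/
def IsMatching (M : A → Option A) : Prop :=
  (∀ a b, M a = some b → M b = some a) ∧ ∀ a, M a ≠ some a

/-- `{a,b}` is a blocking pair for `M`: mutually acceptable, and each is
unmatched or prefers the other to its partner. -/
def Blocks (I : SRI A) (M : A → Option A) (a b : A) : Prop :=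
  a ≠ b ∧ I.acceptable a b ∧ I.acceptable b a ∧
    (∀ c, M a = some c → I.rank a b < I.rank a c) ∧
    (∀ c, M b = some c → I.rank b a < I.rank b c)

/-- `M` is a stable matching of `I`. -/
def IsStable (I : SRI A) (M : A → Option A) : Prop :=
  IsMatching M ∧ (∀ a b, M a = some b → I.acceptable a b ∧ I.acceptable b a) ∧
    ∀ a b, ¬ I.Blocks M a b

open Classical in
/-- The number of agents matched to their `k`-th choice in `M` (the `k`-th profile entry). -/
noncomputable def nChoices [Fintype A] (I : SRI A) (M : A → Option A) (k : ℕ) : ℕ :=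
  (Finset.univ.filter (fun a => ∃ b, M a = some b ∧ I.rank a b = k)).card

/-- The cost of a matching: the sum over matched agents of the rank of their partner. -/
def cost [Fintype A] (I : SRI A) (M : A → Option A) : ℕ :=
  ∑ a, (M a).elim 0 (I.rank a)

end SRI

/-- Agents of the reduction instance: for each vertex `i` of the graph, eight
agents `v^1_i,…,v^8_i` (indexed 0–7), five agents `w^1_i,…,w^5_i` and five agents
`x^1_i,…,x^5_i` (indexed 0–4). -/
abbrev FCAgent (n : ℕ) := Fin n × (Fin 8 ⊕ Fin 5 ⊕ Fin 5)

namespace FCAgent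

/-- The agent `v^{r+1}_i`. -/
def v {n : ℕ} (i : Fin n) (r : Fin 8) : FCAgent n := (i, Sum.inl r)

/-- The agent `w^{j+1}_i`. -/
def w {n : ℕ} (i : Fin n) (j : Fin 5) : FCAgent n := (i, Sum.inr (Sum.inl j))

/-- The agent `x^{j+1}_i`. -/
def x {n : ℕ} (i : Fin n) (j : Fin 5) : FCAgent n := (i, Sum.inr (Sum.inr j))

/-- The odd `v`-agent `v^{2s+1}` sitting in slot `s` of a vertex. -/
def slotAgent {n : ℕ} (p : Fin n × Fin 3) : FCAgent n :=
  v p.1 ⟨2 * p.2.val, by have := p.2.isLt; omega⟩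

/-- The `v`-agent that is `w^{j+1}_i`'s second choice: `w^1↔v^2, w^2↔v^4, w^3↔v^6,
w^4↔v^7, w^5↔v^8`. -/
def wPartner {n : ℕ} (i : Fin n) (j : Fin 5) : FCAgent n :=
  v i (match j.val with
    | 0 => 1
    | 1 => 3
    | 2 => 5
    | 3 => 6
    | _ => 7)

end FCAgent

/-- The preference lists of the reduction instance, given a slot-assignment `mate`
pairing each of the three slots (`v^1, v^3, v^5`) of each vertex with a slot of an
adjacent vertex:
`v^1_i: (v^2_i, v^s, v^8_i)`, `v^2_i: (v^3_i, w^1_i, v^1_i)`,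
`v^3_i: (v^4_i, v^{s'}, v^2_i)`, `v^4_i: (v^5_i, w^2_i, v^3_i)`,
`v^5_i: (v^6_i, v^{s''}, v^4_i)`, `v^6_i: (v^7_i, w^3_i, v^5_i)`,
`v^7_i: (v^8_i, v^6_i, w^4_i)`, `v^8_i: (v^1_i, w^5_i, v^7_i)`,
`w^j_i: (x^j_i, corresponding v-agent)`, `x^j_i: (w^j_i)`. -/
def FCpref (n : ℕ) (mate : Fin n → Fin 3 → Fin n × Fin 3) : FCAgent n → List (FCAgent n) :=
  fun a => match a with
  | (i, Sum.inl r) =>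
    match r.val with
    | 0 => [FCAgent.v i 1, FCAgent.slotAgent (mate i 0), FCAgent.v i 7]
    | 1 => [FCAgent.v i 2, FCAgent.w i 0, FCAgent.v i 0]
    | 2 => [FCAgent.v i 3, FCAgent.slotAgent (mate i 1), FCAgent.v i 1]
    | 3 => [FCAgent.v i 4, FCAgent.w i 1, FCAgent.v i 2]
    | 4 => [FCAgent.v i 5, FCAgent.slotAgent (mate i 2), FCAgent.v i 3]
    | 5 => [FCAgent.v i 6, FCAgent.w i 2, FCAgent.v i 4]
    | 6 => [FCAgent.v i 7, FCAgent.v i 5, FCAgent.w i 3]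
    | _ => [FCAgent.v i 0, FCAgent.w i 4, FCAgent.v i 6]
  | (i, Sum.inr (Sum.inl j)) => [FCAgent.x i j, FCAgent.wPartner i j]
  | (i, Sum.inr (Sum.inr j)) => [FCAgent.w i j]

/-- The matching built from a vertex cover `C`: always `{x^j_i, w^j_i}`; for
`i ∈ C` (case 1) the pairs `{v^1,v^2},{v^3,v^4},{v^5,v^6},{v^7,v^8}`; for `i ∉ C`
(case 2) the pairs `{v^2,v^3},{v^4,v^5},{v^6,v^7},{v^8,v^1}`. -/
def FCmatch (n : ℕ) (C : Finset (Fin n)) : FCAgent n → Option (FCAgent n) :=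
  fun a => match a with
  | (i, Sum.inl r) =>
      if i ∈ C then
        some (FCAgent.v i
          ⟨(if r.val % 2 = 0 then r.val + 1 else r.val - 1) % 8, Nat.mod_lt _ (by norm_num)⟩)
      else
        some (FCAgent.v i
          ⟨(if r.val % 2 = 1 then r.val + 1 else r.val + 7) % 8, Nat.mod_lt _ (by norm_num)⟩)
  | (i, Sum.inr (Sum.inl j)) => some (FCAgent.x i j)
  | (i, Sum.inr (Sum.inr j)) => some (FCAgent.w i j)

/-!
Under `FCmatch n C` the rank an agent gives its partner is `FCmatchRank C`: `1` for the `w`- and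
`x`-agents and half of the `v`-agents of each vertex, `3` for the other four `v`-agents of a vertex
in `C`, and `3` for three of the other four of a vertex outside `C`, its `v^7` getting rank `2`.
This gives the profile. For stability it suffices that every agent that some agent prefers to its
partner holds its first choice. Inside a gadget this is read off the lists; the only agents outside
its own gadget that an agent prefers to its partner are the slot agents of the neighbours of a
vertex outside `C`, and these neighbours lie in the cover, where slot agents get their first choice.
-/

namespace SRI

variable {A : Type} [DecidableEq A] (I : SRI A) {M : A → Option A} {ρ : A → ℕ}

theorem one_le_rank (a b : A) : 1 ≤ I.rank a b := Nat.le_add_left 1 _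

theorem not_blocks_of_forall_mem_take (hρ : ∀ a c, M a = some c → I.rank a c = ρ a)
    (hM : ∀ a, ∃ c, M a = some c) (h : ∀ a, ∀ b ∈ (I.pref a).take (ρ a - 1), ρ b = 1)
    (a b : A) : ¬ I.Blocks M a b := by
  rintro ⟨-, hab, -, ha, hb⟩
  obtain ⟨c, hc⟩ := hM a
  obtain ⟨d, hd⟩ := hM b
  have hlt : I.rank a b < ρ a := hρ a c hc ▸ ha c hc
  have hρb : ρ b = 1 :=
    h a b <| (List.mem_take_iff_idxOf_lt hab).2 (by unfold rank at hlt; omega)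
  have hba := hb d hd
  rw [hρ b d hd, hρb] at hba
  exact absurd (I.one_le_rank b a) (by omega)

theorem nChoices_eq_card_filter [Fintype A] (hρ : ∀ a c, M a = some c → I.rank a c = ρ a)
    (hM : ∀ a, ∃ c, M a = some c) (k : ℕ) :
    I.nChoices M k = (Finset.univ.filter (ρ · = k)).card := by
  unfold nChoices
  congr 1
  ext a
  obtain ⟨c, hc⟩ := hM a
  simp only [Finset.mem_filter, Finset.mem_univ, true_and]
  constructor
  · rintro ⟨b, hb, rfl⟩
    exact (hρ a b hb).symm
  · rintro rfl
    exact ⟨c, hc, hρ a c hc⟩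

end SRI

theorem FCAgent.slotAgent_ne_of_odd {n : ℕ} (p : Fin n × Fin 3) (i : Fin n) {r : Fin 8}
    (hr : r.val % 2 = 1) : FCAgent.slotAgent p ≠ (i, Sum.inl r) := by
  simp only [FCAgent.slotAgent, FCAgent.v, ne_eq, Prod.mk.injEq, Sum.inl.injEq, Fin.ext_iff]
  omega

section FCmatch

open FCAgent

variable {n : ℕ} (C : Finset (Fin n))

/-- `r` is 0-based: even `r` is the odd-numbered agent `v^{r+1}`. -/
def FCmatchRank : FCAgent n → ℕ
  | (i, Sum.inl r) =>
      if i ∈ C then (if r.val % 2 = 0 then 1 else 3)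
      else if r.val % 2 = 1 then 1 else if r.val = 6 then 2 else 3
  | (_, Sum.inr _) => 1

theorem FCmatchRank_inl (i : Fin n) (r : Fin 8) : FCmatchRank C (i, Sum.inl r) =
    if i ∈ C then (if r.val % 2 = 0 then 1 else 3)
    else if r.val % 2 = 1 then 1 else if r.val = 6 then 2 else 3 := rfl

theorem FCmatchRank_inr (i : Fin n) (j : Fin 5 ⊕ Fin 5) : FCmatchRank C (i, Sum.inr j) = 1 := rfl

theorem FCmatchRank_le_three (a : FCAgent n) : FCmatchRank C a ≤ 3 := by
  rcases a with ⟨i, r | j⟩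
  · simp only [FCmatchRank_inl]
    split_ifs <;> omega
  · simp [FCmatchRank_inr]

theorem FCmatchRank_slotAgent {p : Fin n × Fin 3} (hp : p.1 ∈ C) :
    FCmatchRank C (slotAgent p) = 1 := by
  simp [slotAgent, v, FCmatchRank_inl, hp]

theorem card_FCmatchRank_eq_three :
    (Finset.univ.filter (fun a => FCmatchRank C a = 3)).card = 3 * n + C.card := by
  have hvertex (i : Fin n) : (Finset.univ.filter (fun s => FCmatchRank C (i, s) = 3)).card =
      3 + if i ∈ C then 1 else 0 := by
    rw [Finset.card_filter]
    by_cases hi : i ∈ C <;> simp [Fintype.sum_sum_type, FCmatchRank, hi] <;> decide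
  rw [← Finset.univ_product_univ, Finset.card_filter, Finset.sum_product]
  simp only [← Finset.card_filter, hvertex]
  simp [Finset.sum_add_distrib, mul_comm]

theorem exists_FCmatch_eq_some (a : FCAgent n) : ∃ b, FCmatch n C a = some b := by
  rcases a with ⟨i, r | j | j⟩ <;> simp only [FCmatch] <;> (try split_ifs) <;>
    exact ⟨_, rfl⟩

theorem FCmatch_symm {a b : FCAgent n} (h : FCmatch n C a = some b) :
    FCmatch n C b = some a := by
  rcases a with ⟨i, r | j | j⟩
  · by_cases hi : i ∈ C <;> fin_cases r <;>
      simp only [FCmatch, hi, ↓reduceIte, Option.some.injEq] at h <;> subst h <;>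
      simp [FCmatch, hi, v]
  all_goals simp only [FCmatch, Option.some.injEq] at h; subst h; rfl

theorem FCmatch_ne_self (a : FCAgent n) : FCmatch n C a ≠ some a := by
  rcases a with ⟨i, r | j | j⟩
  · by_cases hi : i ∈ C <;> fin_cases r <;> simp [FCmatch, hi, v]
  all_goals simp [FCmatch, x, w]

variable (mate : Fin n → Fin 3 → Fin n × Fin 3)

theorem FCmatch_mem_FCpref {a b : FCAgent n} (h : FCmatch n C a = some b) :
    b ∈ FCpref n mate a := by
  rcases a with ⟨i, r | j | j⟩
  · by_cases hi : i ∈ C <;> fin_cases r <;>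
      simp only [FCmatch, hi, ↓reduceIte, Option.some.injEq] at h <;> subst h <;>
      simp [FCpref]
  all_goals simp only [FCmatch, Option.some.injEq] at h; subst h; simp [FCpref]

theorem rank_FCmatch {a b : FCAgent n} (h : FCmatch n C a = some b) :
    (SRI.mk (FCpref n mate)).rank a b = FCmatchRank C a := by
  rcases a with ⟨i, r | j | j⟩
  · by_cases hi : i ∈ C <;> fin_cases r <;>
      simp only [FCmatch, hi, ↓reduceIte, Option.some.injEq] at h <;> subst h <;>
      simp [FCpref, SRI.rank, FCmatchRank_inl, hi, v, w, List.idxOf_cons_ne,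
        slotAgent_ne_of_odd]
  all_goals
    simp only [FCmatch, Option.some.injEq] at h
    subst h
    simp [FCpref, SRI.rank, FCmatchRank_inr]

theorem FCmatchRank_eq_one_of_mem_take (hcov : ∀ i s, i ∉ C → (mate i s).1 ∈ C)
    (a : FCAgent n) :
    ∀ b ∈ (FCpref n mate a).take (FCmatchRank C a - 1), FCmatchRank C b = 1 := by
  rcases a with ⟨i, r | j | j⟩
  · by_cases hi : i ∈ C <;> fin_cases r <;>
      simp [FCpref, hi, v, w, FCmatchRank_inl, FCmatchRank_inr, FCmatchRank_slotAgent, hcov]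
  all_goals simp [FCmatchRank_inr]

end FCmatch

theorem lc_reduction_cover_gives_stable_general {n : ℕ} (G : SimpleGraph (Fin n))
    (mate : Fin n → Fin 3 → Fin n × Fin 3)
    (hmadj : ∀ i s, G.Adj i (mate i s).1)
    (C : Finset (Fin n)) (hC : ∀ i j, G.Adj i j → i ∈ C ∨ j ∈ C) :
    (SRI.mk (FCpref n mate)).IsStable (FCmatch n C) ∧
      (SRI.mk (FCpref n mate)).nChoices (FCmatch n C) 3 = 3 * n + C.card ∧
      (∀ a b, FCmatch n C a = some b → (SRI.mk (FCpref n mate)).rank a b ≤ 3) := by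
  have hcov : ∀ i s, i ∉ C → (mate i s).1 ∈ C := fun i s hi =>
    (hC i _ (hmadj i s)).resolve_left hi
  have hrank : ∀ a b, FCmatch n C a = some b →
      (SRI.mk (FCpref n mate)).rank a b = FCmatchRank C a := fun _ _ => rank_FCmatch C mate
  have htotal := exists_FCmatch_eq_some C
  refine ⟨⟨⟨fun _ _ => FCmatch_symm C, FCmatch_ne_self C⟩, ?_, ?_⟩, ?_, ?_⟩
  · exact fun _ _ h =>
      ⟨FCmatch_mem_FCpref C mate h, FCmatch_mem_FCpref C mate (FCmatch_symm C h)⟩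
  · exact SRI.not_blocks_of_forall_mem_take _ hrank htotal
      (FCmatchRank_eq_one_of_mem_take C mate hcov)
  · rw [SRI.nChoices_eq_card_filter _ hrank htotal, card_FCmatchRank_eq_three]
  · exact fun a b h => (hrank a b h).trans_le (FCmatchRank_le_three C a)

/-- In the last-choice reduction (the gadget with `v^7_i: (v^8_i, v^6_i, w^4_i)`),
if `G` is a cubic graph with `n` vertices and `C` a vertex cover of size `k`, then
the matching given by case 1 on agent groups of vertices in `C` and case 2
elsewhere is a stable matching with exactly `3n + k` agents matched to their third
choices, and no agent matched to a rank worse than 3. -/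
theorem lc_reduction_cover_gives_stable {n : ℕ} (G : SimpleGraph (Fin n))
    [DecidableRel G.Adj] (hcubic : ∀ i, G.degree i = 3)
    (mate : Fin n → Fin 3 → Fin n × Fin 3)
    (hmadj : ∀ i s, G.Adj i (mate i s).1)
    (hminv : ∀ i s, mate (mate i s).1 (mate i s).2 = (i, s))
    (hmcov : ∀ i j, G.Adj i j → ∃! s, (mate i s).1 = j)
    (C : Finset (Fin n)) (hC : ∀ i j, G.Adj i j → i ∈ C ∨ j ∈ C) :
    (SRI.mk (FCpref n mate)).IsStable (FCmatch n C) ∧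
      (SRI.mk (FCpref n mate)).nChoices (FCmatch n C) 3 = 3 * n + C.card ∧
      (∀ a b, FCmatch n C a = some b → (SRI.mk (FCpref n mate)).rank a b ≤ 3) :=
  lc_reduction_cover_gives_stable_general G mate hmadj C hC
end

section
/- In the independent-set reduction instance for FC-SRI: for each vertex u_i, after iteratively deleting pairs that can appear in no stable matching, the reduced preference lists are v_i: (w_i, [neighbours v_j], y_i); w_i: (x_i, v_i); x_i: (y_i, w_i); y_i: (v_i, x_i); a_i: (b_i); b_i: (a_i). In particular {a_i, b_i} belongs to every stable matching of the instance. -/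
/-- Agents of the independent-set reduction: for each vertex `i` of the graph, six
agents `v_i, w_i, x_i, y_i, a_i, b_i` (indexed by `Fin 6` in this order). -/
abbrev ISAgent (n : ℕ) := Fin n × Fin 6

namespace ISAgent

def va {n : ℕ} (i : Fin n) : ISAgent n := (i, 0)
def wa {n : ℕ} (i : Fin n) : ISAgent n := (i, 1)
def xa {n : ℕ} (i : Fin n) : ISAgent n := (i, 2)
def ya {n : ℕ} (i : Fin n) : ISAgent n := (i, 3)
def aa {n : ℕ} (i : Fin n) : ISAgent n := (i, 4)
def ba {n : ℕ} (i : Fin n) : ISAgent n := (i, 5)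

end ISAgent

open ISAgent in
/-- The preference lists of the independent-set reduction instance built from `G`:
`v_i: (a_i, w_i, [v_j for neighbours u_j of u_i], y_i)`;
`w_i: (x_i, v_i, a_i, b_i)`; `x_i: (a_i, y_i, w_i)`; `y_i: (a_i, v_i, x_i)`;
`a_i: (w_i, b_i, v_i, x_i, y_i)`; `b_i: (w_i, a_i)`. -/
def ISpref (n : ℕ) (G : SimpleGraph (Fin n)) [DecidableRel G.Adj] :
    ISAgent n → List (ISAgent n) :=
  fun p => match p.2.val with
  | 0 => [aa p.1, wa p.1] ++
      (Finset.sort (G.neighborFinset p.1) (· ≤ ·)).map va ++ [ya p.1]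
  | 1 => [xa p.1, va p.1, aa p.1, ba p.1]
  | 2 => [aa p.1, ya p.1, wa p.1]
  | 3 => [aa p.1, va p.1, xa p.1]
  | 4 => [wa p.1, ba p.1, va p.1, xa p.1, ya p.1]
  | _ => [wa p.1, aa p.1]

open ISAgent in
/-- The matching built from a set `S` of vertices: always `{a_i, b_i}`; for
`i ∈ S` the pairs `{v_i, y_i}` and `{w_i, x_i}`; for `i ∉ S` the pairs
`{v_i, w_i}` and `{x_i, y_i}`. -/
def ISmatch (n : ℕ) (S : Finset (Fin n)) : ISAgent n → Option (ISAgent n) :=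
  fun p => match p.2.val with
  | 0 => some (if p.1 ∈ S then ya p.1 else wa p.1)
  | 1 => some (if p.1 ∈ S then xa p.1 else va p.1)
  | 2 => some (if p.1 ∈ S then wa p.1 else ya p.1)
  | 3 => some (if p.1 ∈ S then va p.1 else xa p.1)
  | 4 => some (ba p.1)
  | _ => some (aa p.1)

/-!
The agent `b_i` accepts only `w_i` and `a_i`, and `w_i` ranks `v_i` above both of them. So whenever
`w_i` is matched to `a_i` or `b_i`, the pair `{v_i, w_i}` forces `v_i` onto its first choice `a_i`.
This excludes `{b_i, w_i}`, since `{a_i, w_i}` would then block. If `a_i` were not matched to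
`b_i`, then `b_i` would be single, so `a_i` would need a partner it likes at least as much as `b_i`,
namely `w_i`; but then `v_i` would have to hold `a_i` as well.
-/

namespace SRI

variable {A : Type} [DecidableEq A] {I : SRI A} {M : A → Option A} {a b c p q : A}

theorem eq_or_eq_of_rank_le_two {l : List A} (h : I.pref a = p :: q :: l)
    (hc : I.rank a c ≤ 2) : c = p ∨ c = q := by
  by_contra! hne
  rw [rank, h, List.idxOf_cons_ne _ hne.1.symm, List.idxOf_cons_ne _ hne.2.symm] at hc
  omega

theorem IsStable.exists_partner_rank_le (hM : I.IsStable M) (hne : a ≠ b)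
    (hab : I.acceptable a b) (hba : I.acceptable b a)
    (hb : ∀ c, M b = some c → I.rank b a < I.rank b c) :
    ∃ c, M a = some c ∧ I.rank a c ≤ I.rank a b := by
  by_contra! ha
  exact hM.2.2 a b ⟨hne, hab, hba, ha, hb⟩

end SRI

open ISAgent

def ISinst (n : ℕ) (G : SimpleGraph (Fin n)) [DecidableRel G.Adj] : SRI (ISAgent n) :=
  ⟨ISpref n G⟩

namespace ISinst

variable {n : ℕ} {G : SimpleGraph (Fin n)} [DecidableRel G.Adj] (i : Fin n)

theorem pref_va : (ISinst n G).pref (va i) =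
    aa i :: wa i :: ((Finset.sort (G.neighborFinset i) (· ≤ ·)).map va ++ [ya i]) := rfl
theorem pref_wa : (ISinst n G).pref (wa i) = [xa i, va i, aa i, ba i] := rfl
theorem pref_aa : (ISinst n G).pref (aa i) = [wa i, ba i, va i, xa i, ya i] := rfl
theorem pref_ba : (ISinst n G).pref (ba i) = [wa i, aa i] := rfl

theorem rank_va_wa : (ISinst n G).rank (va i) (wa i) = 2 := by
  simp [SRI.rank, pref_va, aa, wa]
theorem rank_wa_va : (ISinst n G).rank (wa i) (va i) = 2 := by
  simp [SRI.rank, pref_wa, xa, va]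
theorem rank_wa_aa : (ISinst n G).rank (wa i) (aa i) = 3 := by
  simp [SRI.rank, pref_wa, xa, va, aa]
theorem rank_wa_ba : (ISinst n G).rank (wa i) (ba i) = 4 := by
  simp [SRI.rank, pref_wa, xa, va, aa, ba]
theorem rank_aa_wa : (ISinst n G).rank (aa i) (wa i) = 1 := by
  simp [SRI.rank, pref_aa]
theorem rank_aa_ba : (ISinst n G).rank (aa i) (ba i) = 2 := by
  simp [SRI.rank, pref_aa, wa, ba]
theorem rank_aa_va : (ISinst n G).rank (aa i) (va i) = 3 := by
  simp [SRI.rank, pref_aa, wa, ba, va]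

variable {i} {M : ISAgent n → Option (ISAgent n)}

theorem partner_va_eq_aa (hM : (ISinst n G).IsStable M)
    (hw : M (wa i) = some (aa i) ∨ M (wa i) = some (ba i)) :
    M (va i) = some (aa i) := by
  have hw_prefers_v : ∀ c, M (wa i) = some c →
      (ISinst n G).rank (wa i) (va i) < (ISinst n G).rank (wa i) c := by
    rintro c hc
    rcases hw with hw | hw <;> rw [hw] at hc <;> cases hc <;>
      simp [rank_wa_va, rank_wa_aa, rank_wa_ba]
  obtain ⟨c, hc, hc_rank⟩ := hM.exists_partner_rank_le (by simp [va, wa])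
    (by simp [SRI.acceptable, pref_va]) (by simp [SRI.acceptable, pref_wa]) hw_prefers_v
  rw [rank_va_wa] at hc_rank
  rcases SRI.eq_or_eq_of_rank_le_two (pref_va i) hc_rank with rfl | rfl
  · exact hc
  · have := hM.1.1 _ _ hc
    rcases hw with hw | hw <;> rw [hw] at this <;> simp [aa, ba, va] at this

theorem partner_ba_ne_wa (hM : (ISinst n G).IsStable M) : M (ba i) ≠ some (wa i) := by
  intro hbw
  have hwb : M (wa i) = some (ba i) := hM.1.1 _ _ hbw
  have hav : M (aa i) = some (va i) := hM.1.1 _ _ (partner_va_eq_aa hM (.inr hwb))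
  refine hM.2.2 (aa i) (wa i) ⟨by simp [aa, wa], by simp [SRI.acceptable, pref_aa],
    by simp [SRI.acceptable, pref_wa], ?_, ?_⟩
  · rintro c hc
    rw [hav] at hc
    cases hc
    simp [rank_aa_wa, rank_aa_va]
  · rintro c hc
    rw [hwb] at hc
    cases hc
    simp [rank_wa_aa, rank_wa_ba]

theorem partner_aa_eq_ba (hM : (ISinst n G).IsStable M) : M (aa i) = some (ba i) := by
  by_contra hab
  have hb_single : ∀ c, M (ba i) ≠ some c := by
    intro c hc
    have hc_mem : c ∈ [wa i, aa i] := pref_ba (G := G) i ▸ (hM.2.1 _ _ hc).1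
    simp only [List.mem_cons, List.not_mem_nil, or_false] at hc_mem
    rcases hc_mem with rfl | rfl
    · exact partner_ba_ne_wa hM hc
    · exact hab (hM.1.1 _ _ hc)
  obtain ⟨c, hc, hc_rank⟩ := hM.exists_partner_rank_le (a := aa i) (by simp [aa, ba])
    (by simp [SRI.acceptable, pref_aa]) (by simp [SRI.acceptable, pref_ba])
    (fun c hc => absurd hc (hb_single c))
  rw [rank_aa_ba] at hc_rank
  rcases SRI.eq_or_eq_of_rank_le_two (pref_aa i) hc_rank with rfl | rfl
  · have hva := hM.1.1 _ _ (partner_va_eq_aa hM (.inl (hM.1.1 _ _ hc)))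
    rw [hc] at hva
    simp [va, wa] at hva
  · exact hab hc

end ISinst

/-- In the independent-set reduction instance for FC-SRI, iterated deletion removes
precisely the pairs `{b_i, w_i}`, `{a_i, v_i}`, `{a_i, x_i}`, `{a_i, y_i}` and
`{a_i, w_i}`: none of these pairs occurs in any stable matching. In particular,
`{a_i, b_i}` belongs to every stable matching of the instance. -/
theorem is_reduction_reduced_lists {n : ℕ} (G : SimpleGraph (Fin n))
    [DecidableRel G.Adj]
    (M : ISAgent n → Option (ISAgent n))
    (hM : (SRI.mk (ISpref n G)).IsStable M) :
    ∀ i : Fin n,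
      M (aa i) = some (ba i) ∧
      M (ba i) ≠ some (wa i) ∧
      M (aa i) ≠ some (va i) ∧
      M (aa i) ≠ some (xa i) ∧
      M (aa i) ≠ some (ya i) ∧
      M (aa i) ≠ some (wa i) := by
  intro i
  have hab : M (aa i) = some (ba i) := ISinst.partner_aa_eq_ba (G := G) hM
  have hba : M (ba i) = some (aa i) := hM.1.1 _ _ hab
  rw [hab, hba]
  simp [aa, ba, va, wa, xa, ya]
end

section
/- In the independent-set reduction instance for FC-SRI built from a graph G, if S is an independent set of G of size k, then the matching that pairs {a_i,b_i} for all i, pairs {v_i,w_i} and {x_i,y_i} for u_i ∉ S, and pairs {v_i,y_i} and {w_i,x_i} for u_i ∈ S, is a stable matching in which exactly k agents (namely the agents w_i with u_i ∈ S) are matched to their (original) first choice. -/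
/-! Every agent is matched by `ISmatch n S`, so it is stable exactly when no two agents each
prefer the other to their partner. Each agent prefers at most `a_i` and one agent of its own
gadget to its partner, except `v_i` for `u_i ∈ S`, who also prefers the `v_j` of the neighbours
`u_j`. Checking these candidates in turn, the only pair that could prefer each other is
`{v_i, v_j}` with `u_i, u_j` adjacent and both in `S`, which independence rules out. The first
choice of `w_i` is `x_i`, its partner exactly when `u_i ∈ S`; no other agent gets its first
choice. -/

namespace SRI

variable {A : Type} [DecidableEq A]

def preferredTo (I : SRI A) (a c : A) : List A := (I.pref a).take ((I.pref a).idxOf c)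

theorem Blocks.symm {I : SRI A} {M : A → Option A} {a b : A} (h : I.Blocks M a b) :
    I.Blocks M b a :=
  let ⟨hne, hab, hba, ha, hb⟩ := h
  ⟨hne.symm, hba, hab, hb, ha⟩

theorem Blocks.mem_preferredTo {I : SRI A} {M : A → Option A} {a b c : A}
    (h : I.Blocks M a b) (hc : M a = some c) : b ∈ I.preferredTo a c :=
  (List.mem_take_iff_idxOf_lt h.2.1).2 (Nat.succ_lt_succ_iff.1 (h.2.2.2.1 c hc))

theorem isStable_some_comp {I : SRI A} {f : A → A} (hf : Function.Involutive f)
    (hne : ∀ a, f a ≠ a) (hacc : ∀ a, I.acceptable a (f a))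
    (hpref : ∀ a b, b ∈ I.preferredTo a (f a) → a ∉ I.preferredTo b (f b)) :
    I.IsStable (some ∘ f) := by
  refine ⟨⟨?_, fun a h => hne a (Option.some_injective _ h)⟩, ?_, fun a b h => ?_⟩
  · rintro a b ⟨⟩
    exact congrArg some (hf a)
  · rintro a b ⟨⟩
    refine ⟨hacc a, ?_⟩
    simpa only [hf a] using hacc (f a)
  · exact hpref a b (h.mem_preferredTo rfl) (h.symm.mem_preferredTo rfl)

theorem nChoices_some_comp [Fintype A] (I : SRI A) (f : A → A) (k : ℕ) :
    I.nChoices (some ∘ f) k = (Finset.univ.filter fun a => I.rank a (f a) = k).card := by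
  simp [nChoices]

end SRI

section ISReduction

open ISAgent

def ISpartner {n : ℕ} (S : Finset (Fin n)) (p : ISAgent n) : ISAgent n :=
  match p.2.val with
  | 0 => if p.1 ∈ S then ya p.1 else wa p.1
  | 1 => if p.1 ∈ S then xa p.1 else va p.1
  | 2 => if p.1 ∈ S then wa p.1 else ya p.1
  | 3 => if p.1 ∈ S then va p.1 else xa p.1
  | 4 => ba p.1
  | _ => aa p.1

attribute [local simp] va wa xa ya aa ba

variable {n : ℕ} (G : SimpleGraph (Fin n)) [DecidableRel G.Adj] (S : Finset (Fin n))

theorem ISmatch_eq_some_comp : ISmatch n S = some ∘ ISpartner S := by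
  funext ⟨i, k⟩
  fin_cases k <;> rfl

theorem ISpartner_involutive : Function.Involutive (ISpartner S) := by
  rintro ⟨i, k⟩
  fin_cases k <;> by_cases hi : i ∈ S <;> simp [ISpartner, hi]

theorem ISpartner_ne_self (p : ISAgent n) : ISpartner S p ≠ p := by
  rcases p with ⟨i, k⟩
  fin_cases k <;> by_cases hi : i ∈ S <;> simp [ISpartner, hi]

theorem ISpartner_mem_ISpref (p : ISAgent n) : ISpartner S p ∈ ISpref n G p := by
  rcases p with ⟨i, k⟩
  fin_cases k <;> by_cases hi : i ∈ S <;> simp [ISpref, ISpartner, hi]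

theorem rank_ISpartner_eq_one_iff (p : ISAgent n) :
    (SRI.mk (ISpref n G)).rank p (ISpartner S p) = 1 ↔ ∃ i ∈ S, p = wa i := by
  rcases p with ⟨i, k⟩
  fin_cases k <;> by_cases hi : i ∈ S <;> simp [SRI.rank, ISpref, ISpartner, hi]

variable {G S} in
theorem ISpref_not_mutually_preferred (hS : ∀ i ∈ S, ∀ j ∈ S, ¬ G.Adj i j)
    (p q : ISAgent n) (hq : q ∈ (SRI.mk (ISpref n G)).preferredTo p (ISpartner S p)) :
    p ∉ (SRI.mk (ISpref n G)).preferredTo q (ISpartner S q) := by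
  rcases p with ⟨i, k⟩
  -- `hq` becomes the explicit list of agents that `p` ranks above its partner.
  fin_cases k <;> by_cases hi : i ∈ S <;>
    simp [SRI.preferredTo, ISpref, ISpartner, hi, List.idxOf_append_of_notMem] at hq
  on_goal 1 =>
    obtain rfl | rfl | ⟨j, hij, rfl⟩ := hq
    · simp [SRI.preferredTo, ISpref, ISpartner]
    · simp [SRI.preferredTo, ISpref, ISpartner, hi]
    · have hj : j ∉ S := fun hj => hS i hi j hj hij
      simp [SRI.preferredTo, ISpref, ISpartner, hj]
  all_goals
    obtain rfl | rfl := hq <;> simp [SRI.preferredTo, ISpref, ISpartner, hi]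

theorem wa_injective : Function.Injective (wa (n := n)) :=
  fun _ _ h => congrArg Prod.fst h

theorem filter_rank_ISpartner_eq_one :
    Finset.univ.filter (fun p => (SRI.mk (ISpref n G)).rank p (ISpartner S p) = 1) =
      S.image wa := by
  ext p
  rw [Finset.mem_filter, rank_ISpartner_eq_one_iff, Finset.mem_image]
  simp only [Finset.mem_univ, true_and, eq_comm]

end ISReduction

open ISAgent in
/-- If `S` is an independent set of `G` of size `k`, then the matching pairing
`{a_i,b_i}` for all `i`, `{v_i,w_i}` and `{x_i,y_i}` for `u_i ∉ S`, and
`{v_i,y_i}` and `{w_i,x_i}` for `u_i ∈ S`, is a stable matching of the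
independent-set reduction instance in which exactly `k` agents — namely the agents
`w_i` with `u_i ∈ S` — are matched to their (original) first choice. -/
theorem is_reduction_indep_gives_stable {n : ℕ} (G : SimpleGraph (Fin n))
    [DecidableRel G.Adj]
    (S : Finset (Fin n)) (hS : ∀ i ∈ S, ∀ j ∈ S, ¬ G.Adj i j) :
    (SRI.mk (ISpref n G)).IsStable (ISmatch n S) ∧
      (SRI.mk (ISpref n G)).nChoices (ISmatch n S) 1 = S.card ∧
      (∀ (ag : ISAgent n) (b : ISAgent n), ISmatch n S ag = some b →
        ((SRI.mk (ISpref n G)).rank ag b = 1 ↔ ∃ i ∈ S, ag = wa i)) := by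
  rw [ISmatch_eq_some_comp]
  refine ⟨SRI.isStable_some_comp (ISpartner_involutive S) (ISpartner_ne_self S)
    (ISpartner_mem_ISpref G S) (ISpref_not_mutually_preferred hS), ?_, ?_⟩
  · rw [SRI.nChoices_some_comp, filter_rank_ISpartner_eq_one,
      Finset.card_image_of_injective S wa_injective]
  · rintro p b ⟨⟩
    exact rank_ISpartner_eq_one_iff G S p
end

section
/- In the independent-set reduction instance for FC-SRI, if M is a stable matching in which at least K agents are matched to their first choice, then the set S of vertices u_i whose agent group is matched as {v_i, y_i}, {w_i, x_i} is an independent set of G of size at least K. -/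
/-!
In a stable matching `a_i` is always matched to `b_i`: otherwise one of `{a_i, b_i}`,
`{w_i, a_i}` or `{v_i, w_i}` blocks. Hence no agent other than `w_i` can get its first choice,
and `w_i` gets it exactly when it is matched to `x_i`; then `y_i`, left with `v_i` as its only
possible partner, must take it, since otherwise `{x_i, y_i}` blocks. So the agents with a first
choice inject into `S`. Two adjacent vertices of `S` would give the blocking pair `{v_i, v_j}`.
-/

namespace SRI

variable {A : Type} [DecidableEq A] {I : SRI A} {M : A → Option A} {a b c : A}

theorem rank_lt_rank_of_pref_eq_append {l₁ l₂ : List A} (h : I.pref a = l₁ ++ l₂)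
    (hb : b ∈ l₁) (hc : c ∉ l₁) : I.rank a b < I.rank a c := by
  have hlt := List.idxOf_lt_length_iff.2 hb
  simp only [rank, h, List.idxOf_append_of_mem hb, List.idxOf_append_of_notMem hc]
  omega

theorem eq_of_pref_eq_cons_of_rank_eq_one {t : List A} (h : I.pref a = c :: t)
    (hb : I.rank a b = 1) : b = c := by
  by_contra hbc
  simp only [rank, h, List.idxOf_cons_ne t (Ne.symm hbc)] at hb
  omega

theorem IsStable.symm (hM : I.IsStable M) (h : M a = some b) : M b = some a :=
  hM.1.1 a b h

theorem IsStable.mem_pref (hM : I.IsStable M) (h : M a = some b) : b ∈ I.pref a :=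
  (hM.2.1 a b h).1

theorem IsStable.eq_of_eq_some (hM : I.IsStable M) (ha : M a = some c) (hb : M b = some c) :
    a = b :=
  Option.some_injective _ ((hM.symm ha).symm.trans (hM.symm hb))

theorem IsStable.not_blocks (hM : I.IsStable M) : ¬ I.Blocks M a b :=
  hM.2.2 a b

end SRI

namespace ISAgent

variable {n : ℕ} {G : SimpleGraph (Fin n)} [DecidableRel G.Adj]
  {M : ISAgent n → Option (ISAgent n)} (hM : (SRI.mk (ISpref n G)).IsStable M) (i : Fin n)

theorem pref_va : (SRI.mk (ISpref n G)).pref (va i) =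
    [aa i, wa i] ++ (Finset.sort (G.neighborFinset i) (· ≤ ·)).map va ++ [ya i] :=
  rfl

theorem acceptable_va_va_iff {j : Fin n} :
    (SRI.mk (ISpref n G)).acceptable (va i) (va j) ↔ G.Adj i j := by
  rw [SRI.acceptable, pref_va]
  simp [va, wa, ya, aa]

theorem rank_va_va_lt_rank_va_ya {j : Fin n} (h : G.Adj i j) :
    (SRI.mk (ISpref n G)).rank (va i) (va j) < (SRI.mk (ISpref n G)).rank (va i) (ya i) :=
  SRI.rank_lt_rank_of_pref_eq_append (pref_va i)
    (by simp [va, wa, aa, h]) (by simp [va, wa, ya, aa])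

include hM

theorem not_match_aa_wa : M (aa i) ≠ some (wa i) := by
  intro ha
  have hw := hM.symm ha
  refine hM.not_blocks (a := va i) (b := wa i) ⟨by simp [va, wa], by simp [SRI.acceptable,
    ISpref, va, wa], by simp [SRI.acceptable, ISpref, va, wa], fun c hc => ?_, fun c hc => ?_⟩
  · have hc' : c ∉ [aa i, wa i] := by
      simp only [List.mem_cons, List.not_mem_nil, or_false, not_or]
      constructor <;> rintro rfl
      · exact absurd (hM.eq_of_eq_some hc hw) (by simp [va, wa])
      · exact absurd (hM.eq_of_eq_some hc ha) (by simp [va, aa])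
    exact SRI.rank_lt_rank_of_pref_eq_append (l₁ := [aa i, wa i]) rfl (by simp) hc'
  · obtain rfl := Option.some_injective _ (hc.symm.trans hw)
    exact SRI.rank_lt_rank_of_pref_eq_append (l₁ := [xa i, va i]) rfl (by simp)
      (by simp [aa, xa, va])

theorem not_match_ba_wa : M (ba i) ≠ some (wa i) := by
  intro hb
  have hw := hM.symm hb
  refine hM.not_blocks (a := wa i) (b := aa i) ⟨by simp [wa, aa], by simp [SRI.acceptable,
    ISpref, wa, aa], by simp [SRI.acceptable, ISpref, wa, aa], fun c hc => ?_, fun c hc => ?_⟩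
  · obtain rfl := Option.some_injective _ (hc.symm.trans hw)
    exact SRI.rank_lt_rank_of_pref_eq_append (l₁ := [xa i, va i, aa i]) rfl (by simp)
      (by simp [ba, xa, va, aa])
  · have hc' : c ≠ wa i := by
      rintro rfl
      exact absurd (hM.eq_of_eq_some hc hb) (by simp [aa, ba])
    exact SRI.rank_lt_rank_of_pref_eq_append (l₁ := [wa i]) rfl (by simp) (by simpa using hc')

theorem match_aa_ba : M (aa i) = some (ba i) := by
  by_contra hab
  have hb : M (ba i) = none := by
    cases hb : M (ba i) with
    | none => rfl
    | some d =>
      have hd : d ∈ [wa i, aa i] := hM.mem_pref hb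
      simp only [List.mem_cons, List.not_mem_nil, or_false] at hd
      rcases hd with rfl | rfl
      · exact absurd hb (not_match_ba_wa hM i)
      · exact absurd (hM.symm hb) hab
  refine hM.not_blocks (a := aa i) (b := ba i) ⟨by simp [aa, ba], by simp [SRI.acceptable,
    ISpref, aa, ba], by simp [SRI.acceptable, ISpref, aa, ba], fun c hc => ?_,
    fun c hc => by simp [hb] at hc⟩
  have hc' : c ∉ [wa i, ba i] := by
    simp only [List.mem_cons, List.not_mem_nil, or_false, not_or]
    constructor <;> rintro rfl
    · exact not_match_aa_wa hM i hc
    · exact hab hc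
  exact SRI.rank_lt_rank_of_pref_eq_append (l₁ := [wa i, ba i]) rfl (by simp) hc'

theorem eq_ba_of_match_aa {p : ISAgent n} (h : M p = some (aa i)) : p = ba i :=
  hM.eq_of_eq_some h (hM.symm (match_aa_ba hM i))

theorem eq_wa_xa_of_rank_eq_one {p q : ISAgent n} (h : M p = some q)
    (hr : (SRI.mk (ISpref n G)).rank p q = 1) : p = wa p.1 ∧ q = xa p.1 := by
  obtain ⟨i, k⟩ := p
  fin_cases k <;> obtain rfl := SRI.eq_of_pref_eq_cons_of_rank_eq_one rfl hr
  · exact absurd (eq_ba_of_match_aa hM i h) (by simp [ba])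
  · exact ⟨rfl, rfl⟩
  · exact absurd (eq_ba_of_match_aa hM i h) (by simp [ba])
  · exact absurd (eq_ba_of_match_aa hM i h) (by simp [ba])
  · exact absurd h (not_match_aa_wa hM i)
  · exact absurd h (not_match_ba_wa hM i)

theorem match_va_ya_of_match_wa_xa (hw : M (wa i) = some (xa i)) : M (va i) = some (ya i) := by
  have hx := hM.symm hw
  suffices hy : M (ya i) = some (va i) from hM.symm hy
  cases hy : M (ya i) with
  | none =>
    exfalso
    refine hM.not_blocks (a := xa i) (b := ya i) ⟨by simp [xa, ya], by simp [SRI.acceptable,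
      ISpref, xa, ya], by simp [SRI.acceptable, ISpref, xa, ya], fun c hc => ?_,
      fun c hc => by simp [hy] at hc⟩
    obtain rfl := Option.some_injective _ (hc.symm.trans hx)
    exact SRI.rank_lt_rank_of_pref_eq_append (l₁ := [aa i, ya i]) rfl (by simp)
      (by simp [wa, aa, ya])
  | some d =>
    have hd : d ∈ [aa i, va i, xa i] := hM.mem_pref hy
    simp only [List.mem_cons, List.not_mem_nil, or_false] at hd
    rcases hd with rfl | rfl | rfl
    · exact absurd (eq_ba_of_match_aa hM i hy) (by simp [ya, ba])
    · rfl
    · exact absurd (hM.eq_of_eq_some hy hw) (by simp [ya, wa])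

theorem not_adj_of_match_va_ya {j : Fin n} (hi : M (va i) = some (ya i))
    (hj : M (va j) = some (ya j)) : ¬ G.Adj i j := fun hadj =>
  hM.not_blocks ⟨by simp [va, hadj.ne], (acceptable_va_va_iff i).2 hadj,
    (acceptable_va_va_iff j).2 hadj.symm,
    fun c hc => Option.some_injective _ (hc.symm.trans hi) ▸ rank_va_va_lt_rank_va_ya i hadj,
    fun c hc => Option.some_injective _ (hc.symm.trans hj) ▸ rank_va_va_lt_rank_va_ya j hadj.symm⟩

end ISAgent

open ISAgent

/-- If `M` is a stable matching of the independent-set reduction instance in which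
at least `K` agents are matched to their first choice, then the set `S` of vertices
`u_i` whose agent group is matched as `{v_i, y_i}, {w_i, x_i}` is an independent
set of `G` of size at least `K`. -/
theorem is_reduction_stable_gives_indep {n : ℕ} (G : SimpleGraph (Fin n))
    [DecidableRel G.Adj] (K : ℕ)
    (M : ISAgent n → Option (ISAgent n))
    (hM : (SRI.mk (ISpref n G)).IsStable M)
    (hcount : K ≤ (SRI.mk (ISpref n G)).nChoices M 1) :
    (∀ i ∈ Finset.univ.filter
        (fun i : Fin n => M (va i) = some (ya i) ∧ M (wa i) = some (xa i)),
      ∀ j ∈ Finset.univ.filter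
        (fun i : Fin n => M (va i) = some (ya i) ∧ M (wa i) = some (xa i)),
        ¬ G.Adj i j) ∧
      K ≤ (Finset.univ.filter
        (fun i : Fin n => M (va i) = some (ya i) ∧ M (wa i) = some (xa i))).card := by
  simp only [Finset.mem_filter, Finset.mem_univ, true_and]
  refine ⟨fun i hi j hj => not_adj_of_match_va_ya hM i hi.1 hj.1, hcount.trans ?_⟩
  have first_choice_of_mem {p : ISAgent n} (hp : p ∈ Finset.univ.filter
      (fun a => ∃ b, M a = some b ∧ (SRI.mk (ISpref n G)).rank a b = 1)) :
      p = wa p.1 ∧ M (wa p.1) = some (xa p.1) := by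
    obtain ⟨q, hq, hr⟩ := (Finset.mem_filter.1 hp).2
    obtain ⟨hp, rfl⟩ := eq_wa_xa_of_rank_eq_one hM hq hr
    exact ⟨hp, hp ▸ hq⟩
  refine Finset.card_le_card_of_injOn Prod.fst (fun p hp => ?_) (fun p hp p' hp' h => ?_)
  · obtain ⟨-, hw⟩ := first_choice_of_mem hp
    simpa using ⟨match_va_ya_of_match_wa_xa hM p.1 hw, hw⟩
  · rw [(first_choice_of_mem hp).1, (first_choice_of_mem hp').1, h]
end
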